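/- Let R = Sym(V), Q = Frac(R), s ∈ S, and B_s = R ⊗_{R^s} R. Choose δ_s ∈ V with ⟨α_s^∨, δ_s⟩ = 1. Then in B_s ⊗_R Q: the elements δ_s ⊗ 1 − 1 ⊗ s(δ_s) and δ_s ⊗ 1 − 1 ⊗ δ_s span complementary Q-subbimodules, B_s ⊗_R Q = Q·(δ_s⊗1 − 1⊗s(δ_s)) ⊕ Q·(δ_s⊗1 − 1⊗δ_s), on which the right R-action equals the left action twisted by e and by s respectively (i.e. m·f = f·m on the first summand and m·f = s(f)·m on the second). -/

import Mathlib

open scoped TensorProduct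

/-- The embedding of `V = K^n` as the degree-one part of `R = Sym(V) = K[X₁,…,Xₙ]`. -/
noncomputable def linP {K : Type} [CommRing K] {n : ℕ} (v : Fin n → K) :
    MvPolynomial (Fin n) K :=
  ∑ i, MvPolynomial.C (v i) * MvPolynomial.X i

/-- The extension of the `W`-action on `V` to `R = Sym(V)` by algebra maps. -/
noncomputable def actR {K W : Type} [CommRing K] [Group W] {n : ℕ}
    (π : Representation K W (Fin n → K)) (w : W) :
    MvPolynomial (Fin n) K →ₐ[K] MvPolynomial (Fin n) K :=
  MvPolynomial.aeval fun i => linP (π w (Pi.single i 1))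

/-- The subalgebra `R^s` of `s`-invariants. -/
noncomputable def invs {K W : Type} [CommRing K] [Group W] {n : ℕ}
    (π : Representation K W (Fin n → K)) (s : W) : Subalgebra K (MvPolynomial (Fin n) K) :=
  AlgHom.equalizer (actR π s) (AlgHom.id K (MvPolynomial (Fin n) K))

noncomputable instance invsFracAlgebra {K W : Type} [CommRing K] [Group W] {n : ℕ}
    (π : Representation K W (Fin n → K)) (s : W) :
    Algebra ↥(invs π s) (FractionRing (MvPolynomial (Fin n) K)) :=
  ((algebraMap (MvPolynomial (Fin n) K) (FractionRing (MvPolynomial (Fin n) K))).comp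
    (algebraMap ↥(invs π s) (MvPolynomial (Fin n) K))).toAlgebra

/-- Right multiplication by `q` on the second factor of `Q ⊗_{R^s} Q`. -/
noncomputable def rmulQ {K W : Type} [CommRing K] [IsDomain K] [Group W] {n : ℕ}
    (π : Representation K W (Fin n → K)) (s : W)
    (q : FractionRing (MvPolynomial (Fin n) K)) :
    (FractionRing (MvPolynomial (Fin n) K) ⊗[↥(invs π s)]
        FractionRing (MvPolynomial (Fin n) K)) →ₗ[↥(invs π s)]
      (FractionRing (MvPolynomial (Fin n) K) ⊗[↥(invs π s)]
        FractionRing (MvPolynomial (Fin n) K)) :=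
  LinearMap.lTensor _ (LinearMap.mulLeft ↥(invs π s) q)

/-!
Write `α = δ - s δ`. Since `α` divides `p - s p` for every `p ∈ R`, each `p` can be written
`u + δ v` with `u, v` `s`-invariant; and every `y ∈ Q` becomes a polynomial after multiplication by
the `s`-invariant norm `q · s q` of a denominator `q`. Invariant factors pass through `⊗_{R^s}`, so
`Q ⊗_{R^s} Q` is spanned over `Q` by `1 ⊗ 1` and `1 ⊗ δ`, hence by `a` and `b`, as
`a + b = α • (1 ⊗ 1)`. The `Q`-linear maps `x ⊗ y ↦ x y` and `x ⊗ y ↦ x · s y` send `a ↦ (α, 0)`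
and `b ↦ (0, α)`, so together they are injective and `a, b` is a basis. Right multiplication by
`f` becomes multiplication by `(f, s f)` under these two maps, which gives the bimodule relations.
-/

open MvPolynomial TensorProduct

section Polynomial

variable {K W : Type} [CommRing K] [Group W] {n : ℕ}

lemma linP_eq_linearCombination (v : Fin n → K) :
    linP v = Fintype.linearCombination K (X : Fin n → MvPolynomial (Fin n) K) v := by
  simp [linP, Fintype.linearCombination_apply, smul_eq_C_mul]

lemma linP_sub (v w : Fin n → K) : linP (v - w) = linP v - linP w := by
  simp only [linP_eq_linearCombination, map_sub]

lemma linP_smul (c : K) (v : Fin n → K) : linP (c • v) = c • linP v := by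
  simp only [linP_eq_linearCombination, map_smul]

lemma linP_zero : linP (0 : Fin n → K) = 0 := by
  simp only [linP_eq_linearCombination, map_zero]

lemma linP_single (j : Fin n) : linP (Pi.single j (1 : K)) = X j := by
  simp [linP_eq_linearCombination]

lemma linP_injective : Function.Injective (linP : (Fin n → K) → MvPolynomial (Fin n) K) := by
  simpa only [← _root_.funext linP_eq_linearCombination] using
    linearIndependent_iff_injective_fintypeLinearCombination.1 (linearIndependent_X (Fin n) K)

variable (π : Representation K W (Fin n → K))

lemma actR_X (w : W) (j : Fin n) : actR π w (X j) = linP (π w (Pi.single j 1)) :=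
  aeval_X _ _

lemma actR_linP (w : W) (v : Fin n → K) : actR π w (linP v) = linP (π w v) := by
  have h : (actR π w).toLinearMap ∘ₗ Fintype.linearCombination K X =
      Fintype.linearCombination K X ∘ₗ π w := by
    ext j
    simp [actR_X, linP_eq_linearCombination]
  rw [linP_eq_linearCombination, linP_eq_linearCombination]
  exact LinearMap.congr_fun h v

lemma actR_actR (w w' : W) (p : MvPolynomial (Fin n) K) :
    actR π w (actR π w' p) = actR π (w * w') p := by
  have h : (actR π w).comp (actR π w') = actR π (w * w') := by
    ext j
    simp [actR_X, actR_linP]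
  exact AlgHom.congr_fun h p

lemma actR_one (p : MvPolynomial (Fin n) K) : actR π 1 p = p := by
  have h : actR π 1 = AlgHom.id K _ := by
    ext j
    simp [actR_X, linP_single]
  exact AlgHom.congr_fun h p

lemma linP_dvd_sub_actR {s : W} {α : Fin n → K} {c : (Fin n → K) →ₗ[K] K}
    (hrefl : ∀ v, π s v = v - c v • α) (p : MvPolynomial (Fin n) K) :
    linP α ∣ p - actR π s p := by
  rw [← Ideal.mem_span_singleton, ← Ideal.Quotient.mk_eq_mk_iff_sub_mem]
  have h : (Ideal.Quotient.mkₐ K (Ideal.span {linP α})).comp (actR π s) =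
      Ideal.Quotient.mkₐ K _ := by
    ext j
    rw [AlgHom.comp_apply, actR_X, hrefl, linP_sub, linP_smul, linP_single, map_sub, map_smul,
      Ideal.Quotient.mkₐ_eq_mk, Ideal.Quotient.mk_singleton_self, smul_zero, sub_zero]
  exact (AlgHom.congr_fun h p).symm

noncomputable def actRInvsEquiv {s : W} (hs : s * s = 1) :
    MvPolynomial (Fin n) K ≃ₐ[invs π s] MvPolynomial (Fin n) K :=
  { toFun := actR π s
    invFun := actR π s
    left_inv := fun p => by rw [actR_actR, hs, actR_one]
    right_inv := fun p => by rw [actR_actR, hs, actR_one]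
    map_mul' := map_mul _
    map_add' := map_add _
    commutes' := fun a => a.2 }

@[simp]
lemma actRInvsEquiv_apply {s : W} (hs : s * s = 1) (p : MvPolynomial (Fin n) K) :
    actRInvsEquiv π hs p = actR π s p := rfl

end Polynomial

section TwistedMul

variable {A Q : Type*} [CommRing A] [CommRing Q] [Algebra A Q]

noncomputable def twistedMul (τ : Q →ₐ[A] Q) : Q ⊗[A] Q →ₗ[Q] Q :=
  AlgebraTensorModule.lift <| LinearMap.mk₂' Q A (fun x y => x * τ y)
    (fun _ _ _ => add_mul _ _ _) (fun _ _ _ => smul_mul_assoc _ _ _)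
    (fun x y y' => by rw [map_add, mul_add]) (fun a x y => by rw [map_smul, mul_smul_comm])

@[simp]
lemma twistedMul_tmul (τ : Q →ₐ[A] Q) (x y : Q) : twistedMul τ (x ⊗ₜ y) = x * τ y := rfl

lemma twistedMul_lTensor_mulLeft (τ : Q →ₐ[A] Q) (q : Q) (m : Q ⊗[A] Q) :
    twistedMul τ (LinearMap.lTensor Q (LinearMap.mulLeft A q) m) = τ q * twistedMul τ m := by
  induction m using TensorProduct.induction_on with
  | zero => simp
  | tmul x y =>
    simp only [LinearMap.lTensor_tmul, LinearMap.mulLeft_apply, twistedMul_tmul, map_mul]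
    ring
  | add m m' hm hm' => simp only [map_add, hm, hm', mul_add]

lemma tmul_algebraMap_mul (x y : Q) (a : A) :
    x ⊗ₜ[A] (algebraMap A Q a * y) = algebraMap A Q a • (x ⊗ₜ[A] y) := by
  rw [← Algebra.smul_def, tmul_smul, smul_tmul', Algebra.smul_def]
  exact (smul_tmul' (R := A) (algebraMap A Q a) x y).symm

end TwistedMul

section Involution

-- `A` is a subalgebra, not an arbitrary `R`-algebra, so that `A` acts on `Q` through
-- `Subalgebra.moduleLeft`: this is the module structure that `Q ⊗[invs π s] Q` carries.
variable {S R Q : Type*} [CommRing S] [CommRing R] [Algebra S R] {A : Subalgebra S R} [Field Q]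
  [Algebra R Q] {σ : R ≃ₐ[A] R} {δ : R}

local notation "ι" => algebraMap R Q
local notation "𝐚" => ι δ ⊗ₜ[A] (1 : Q) - 1 ⊗ₜ ι (σ δ)
local notation "𝐛" => ι δ ⊗ₜ[A] (1 : Q) - 1 ⊗ₜ ι δ

lemma exists_fixed_add_mul_of_dvd [IsDomain R] (hσ : ∀ p, σ (σ p) = p) (hδ : δ - σ δ ≠ 0)
    (hdvd : ∀ p, δ - σ δ ∣ p - σ p) (p : R) :
    ∃ u v, σ u = u ∧ σ v = v ∧ p = u + δ * v := by
  obtain ⟨v, hv⟩ := hdvd p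
  have hv_fixed : σ v = v := by
    have hσv := congrArg σ hv
    simp only [map_sub, map_mul, hσ] at hσv
    exact mul_left_cancel₀ hδ (by linear_combination hσv + hv)
  refine ⟨p - δ * v, v, ?_, hv_fixed, by ring⟩
  rw [map_sub, map_mul, hv_fixed]
  linear_combination -hv

lemma exists_fixed_mul_eq_algebraMap [IsDomain R] [IsFractionRing R Q] (hσ : ∀ p, σ (σ p) = p)
    (y : Q) : ∃ N p : R, σ N = N ∧ ι N ≠ 0 ∧ ι N * y = ι p := by
  obtain ⟨p, q, hq, rfl⟩ := IsFractionRing.div_surjective R y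
  have hq0 : ι q ≠ 0 := IsFractionRing.to_map_ne_zero_of_mem_nonZeroDivisors hq
  have hσq0 : ι (σ q) ≠ 0 := IsFractionRing.to_map_ne_zero_of_mem_nonZeroDivisors
    (MulEquivClass.map_nonZeroDivisors σ ▸ Submonoid.mem_map_of_mem σ hq)
  refine ⟨q * σ q, p * σ q, by rw [map_mul, hσ, mul_comm], ?_, ?_⟩
  · rw [map_mul]
    exact mul_ne_zero hq0 hσq0
  · rw [map_mul, map_mul]
    field_simp

lemma tmul_mul_of_fixed (hfix : ∀ p, σ p = p → p ∈ A) {p : R} (hp : σ p = p) (x y : Q) :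
    x ⊗ₜ[A] (ι p * y) = ι p • (x ⊗ₜ[A] y) :=
  tmul_algebraMap_mul x y (⟨p, hfix p hp⟩ : A)

lemma tmul_sub_add_tmul_sub (hσ : ∀ p, σ (σ p) = p) (hfix : ∀ p, σ p = p → p ∈ A) :
    𝐚 + 𝐛 = ι (δ - σ δ) • ((1 : Q) ⊗ₜ[A] (1 : Q)) := by
  have hnorm : (1 : Q) ⊗ₜ[A] ι (δ + σ δ) = ι (δ + σ δ) ⊗ₜ 1 := by
    simpa only [mul_one, smul_tmul', smul_eq_mul] using
      tmul_mul_of_fixed hfix (p := δ + σ δ) (by rw [map_add, hσ, add_comm]) (1 : Q) 1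
  rw [map_add, tmul_add] at hnorm
  rw [smul_tmul', smul_eq_mul, mul_one, map_sub, sub_tmul, eq_sub_of_add_eq' hnorm, add_tmul]
  abel

variable [IsFractionRing R Q]

variable (Q σ) in
noncomputable def twistedMulPair : Q ⊗[A] Q →ₗ[Q] Q × Q :=
  (twistedMul (AlgHom.id A Q)).prod
    (twistedMul (IsFractionRing.algEquivOfAlgEquiv σ : Q ≃ₐ[A] Q).toAlgHom)

lemma twistedMulPair_tmul_sub_tmul_twist (hσ : ∀ p, σ (σ p) = p) :
    twistedMulPair Q σ 𝐚 = (ι (δ - σ δ), 0) := by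
  simp [twistedMulPair, hσ]

lemma twistedMulPair_tmul_sub_tmul_self :
    twistedMulPair Q σ 𝐛 = (0, ι (δ - σ δ)) := by
  simp [twistedMulPair]

lemma twistedMulPair_smul_add_smul (hσ : ∀ p, σ (σ p) = p) (c d : Q) :
    twistedMulPair Q σ (c • 𝐚 + d • 𝐛) = (c * ι (δ - σ δ), d * ι (δ - σ δ)) := by
  simp [twistedMulPair_tmul_sub_tmul_twist hσ, twistedMulPair_tmul_sub_tmul_self]

lemma twistedMulPair_lTensor_mulLeft (q : Q) (m : Q ⊗[A] Q) :
    twistedMulPair Q σ (LinearMap.lTensor Q (LinearMap.mulLeft A q) m) =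
      (q, IsFractionRing.algEquivOfAlgEquiv σ q) * twistedMulPair Q σ m := by
  simp [twistedMulPair, twistedMul_lTensor_mulLeft]

variable [IsDomain R]

lemma span_pair_eq_top (hσ : ∀ p, σ (σ p) = p) (hfix : ∀ p, σ p = p → p ∈ A)
    (hδ : δ - σ δ ≠ 0) (hdvd : ∀ p, δ - σ δ ∣ p - σ p) :
    Submodule.span Q {𝐚, 𝐛} = ⊤ := by
  set S := Submodule.span Q {𝐚, 𝐛}
  have ha : 𝐚 ∈ S := Submodule.subset_span (by simp)
  have hb : 𝐛 ∈ S := Submodule.subset_span (by simp)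
  have hιδ0 : ι (δ - σ δ) ≠ 0 := (map_ne_zero_iff _ (IsFractionRing.injective R Q)).2 hδ
  have h11 : (1 : Q) ⊗ₜ[A] (1 : Q) ∈ S := by
    rw [← inv_smul_smul₀ hιδ0 ((1 : Q) ⊗ₜ[A] (1 : Q)), ← tmul_sub_add_tmul_sub hσ hfix]
    exact S.smul_mem _ (S.add_mem ha hb)
  have h1δ : (1 : Q) ⊗ₜ[A] ι δ ∈ S := by
    have : (1 : Q) ⊗ₜ[A] ι δ = ι δ • ((1 : Q) ⊗ₜ[A] (1 : Q)) - 𝐛 := by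
      rw [smul_tmul', smul_eq_mul, mul_one, sub_sub_cancel]
    rw [this]
    exact S.sub_mem (S.smul_mem _ h11) hb
  have h1R : ∀ p : R, (1 : Q) ⊗ₜ[A] ι p ∈ S := by
    intro p
    obtain ⟨u, v, hu, hv, rfl⟩ := exists_fixed_add_mul_of_dvd hσ hδ hdvd p
    rw [map_add, tmul_add, map_mul, mul_comm]
    refine S.add_mem ?_ ?_
    · simpa only [mul_one, ← tmul_mul_of_fixed hfix hu] using S.smul_mem (ι u) h11
    · rw [tmul_mul_of_fixed hfix hv]
      exact S.smul_mem _ h1δ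
  have h1Q : ∀ y : Q, (1 : Q) ⊗ₜ[A] y ∈ S := by
    intro y
    obtain ⟨N, p, hN, hN0, hNy⟩ := exists_fixed_mul_eq_algebraMap hσ y
    rw [← inv_smul_smul₀ hN0 ((1 : Q) ⊗ₜ[A] y), ← tmul_mul_of_fixed hfix hN, hNy]
    exact S.smul_mem _ (h1R p)
  refine Submodule.eq_top_iff'.2 fun m => ?_
  induction m using TensorProduct.induction_on with
  | zero => exact S.zero_mem
  | tmul x y => simpa only [smul_tmul', smul_eq_mul, mul_one] using S.smul_mem x (h1Q y)
  | add m m' hm hm' => exact S.add_mem hm hm'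

lemma twistedMulPair_injective (hσ : ∀ p, σ (σ p) = p) (hfix : ∀ p, σ p = p → p ∈ A)
    (hδ : δ - σ δ ≠ 0) (hdvd : ∀ p, δ - σ δ ∣ p - σ p) :
    Function.Injective (twistedMulPair Q σ) := by
  have hιδ0 : ι (δ - σ δ) ≠ 0 := (map_ne_zero_iff _ (IsFractionRing.injective R Q)).2 hδ
  refine (injective_iff_map_eq_zero _).2 fun m hm => ?_
  obtain ⟨c, d, rfl⟩ := Submodule.mem_span_pair.1
    (Submodule.eq_top_iff'.1 (span_pair_eq_top (Q := Q) hσ hfix hδ hdvd) m)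
  rw [twistedMulPair_smul_add_smul hσ, Prod.mk_eq_zero, mul_eq_zero, mul_eq_zero] at hm
  rw [hm.1.resolve_right hιδ0, hm.2.resolve_right hιδ0, zero_smul, zero_smul, add_zero]

theorem existsUnique_eq_smul_add_smul (hσ : ∀ p, σ (σ p) = p) (hfix : ∀ p, σ p = p → p ∈ A)
    (hδ : δ - σ δ ≠ 0) (hdvd : ∀ p, δ - σ δ ∣ p - σ p) (m : Q ⊗[A] Q) :
    ∃! c : Q × Q, m = c.1 • 𝐚 + c.2 • 𝐛 := by
  have hιδ0 : ι (δ - σ δ) ≠ 0 := (map_ne_zero_iff _ (IsFractionRing.injective R Q)).2 hδ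
  obtain ⟨c, d, hcd⟩ := Submodule.mem_span_pair.1
    (Submodule.eq_top_iff'.1 (span_pair_eq_top (Q := Q) hσ hfix hδ hdvd) m)
  refine ⟨(c, d), hcd.symm, fun c' hc' => ?_⟩
  have h := congrArg (twistedMulPair Q σ) (hc'.symm.trans hcd.symm)
  rw [twistedMulPair_smul_add_smul hσ, twistedMulPair_smul_add_smul hσ, Prod.mk.injEq] at h
  exact Prod.ext (mul_right_cancel₀ hιδ0 h.1) (mul_right_cancel₀ hιδ0 h.2)

theorem lTensor_mulLeft_tmul_sub_tmul_twist (hσ : ∀ p, σ (σ p) = p)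
    (hfix : ∀ p, σ p = p → p ∈ A) (hδ : δ - σ δ ≠ 0) (hdvd : ∀ p, δ - σ δ ∣ p - σ p) (f : R) :
    LinearMap.lTensor Q (LinearMap.mulLeft A (ι f)) 𝐚 = ι f • 𝐚 := by
  apply twistedMulPair_injective hσ hfix hδ hdvd
  rw [twistedMulPair_lTensor_mulLeft, map_smul, twistedMulPair_tmul_sub_tmul_twist hσ]
  ext <;> simp [Algebra.smul_def]

theorem lTensor_mulLeft_tmul_sub_tmul_self (hσ : ∀ p, σ (σ p) = p)
    (hfix : ∀ p, σ p = p → p ∈ A) (hδ : δ - σ δ ≠ 0) (hdvd : ∀ p, δ - σ δ ∣ p - σ p) (f : R) :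
    LinearMap.lTensor Q (LinearMap.mulLeft A (ι f)) 𝐛 = ι (σ f) • 𝐛 := by
  apply twistedMulPair_injective hσ hfix hδ hdvd
  rw [twistedMulPair_lTensor_mulLeft, map_smul, twistedMulPair_tmul_sub_tmul_self]
  ext <;> simp [Algebra.smul_def]

end Involution

theorem statement13_general {B W : Type} [Group W] {M : CoxeterMatrix B}
    (cs : CoxeterSystem M W)
    (K : Type) [CommRing K] [IsDomain K] (n : ℕ)
    (π : Representation K W (Fin n → K))
    (α : B → (Fin n → K)) (cα : B → ((Fin n → K) →ₗ[K] K))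
    (hrefl : ∀ (i : B) (v : Fin n → K), π (cs.simple i) v = v - cα i v • α i)
    (hne : ∀ i : B, α i ≠ 0)
    (i : B) (δ : Fin n → K) (hδ : cα i δ = 1) :
    letI R := MvPolynomial (Fin n) K
    letI Q := FractionRing R
    letI s := cs.simple i
    letI δQ : Q := algebraMap R Q (linP δ)
    letI sδQ : Q := algebraMap R Q (actR π s (linP δ))
    letI a : Q ⊗[↥(invs π s)] Q := δQ ⊗ₜ 1 - 1 ⊗ₜ sδQ
    letI b : Q ⊗[↥(invs π s)] Q := δQ ⊗ₜ 1 - 1 ⊗ₜ δQ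
    (∀ m : Q ⊗[↥(invs π s)] Q, ∃! c : Q × Q, m = c.1 • a + c.2 • b) ∧
      (∀ f : MvPolynomial (Fin n) K,
        rmulQ π s (algebraMap R Q f) a = algebraMap R Q f • a ∧
          rmulQ π s (algebraMap R Q f) b = algebraMap R Q (actR π s f) • b) := by
  have hs := cs.simple_mul_simple_self i
  simp only [← actRInvsEquiv_apply π hs]
  set σ := actRInvsEquiv π hs
  have hσ : ∀ p, σ (σ p) = p := fun p => by
    simp only [σ, actRInvsEquiv_apply, actR_actR, hs, actR_one]
  have hfix : ∀ p, σ p = p → p ∈ invs π (cs.simple i) := fun p hp => hp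
  have hα : linP δ - σ (linP δ) = linP (α i) := by
    rw [actRInvsEquiv_apply, actR_linP, hrefl, hδ, one_smul, linP_sub, sub_sub_cancel]
  have hα0 : linP δ - σ (linP δ) ≠ 0 := by
    rw [hα, ← linP_zero]
    exact linP_injective.ne (hne i)
  have hdvd : ∀ p, linP δ - σ (linP δ) ∣ p - σ p := hα ▸ linP_dvd_sub_actR π (hrefl i)
  exact ⟨existsUnique_eq_smul_add_smul hσ hfix hα0 hdvd, fun f =>
    ⟨lTensor_mulLeft_tmul_sub_tmul_twist hσ hfix hα0 hdvd f,
      lTensor_mulLeft_tmul_sub_tmul_self hσ hfix hα0 hdvd f⟩⟩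

/-- In `B_s ⊗_R Q ≅ Q ⊗_{R^s} Q`, the elements
`a = δ_s ⊗ 1 − 1 ⊗ s(δ_s)` and `b = δ_s ⊗ 1 − 1 ⊗ δ_s` span complementary `Q`-subbimodules,
`B_s ⊗_R Q = Q·a ⊕ Q·b`, where the right `R`-action on `Q·a` equals the left action and on
`Q·b` equals the left action twisted by `s`. -/
theorem statement13 {B W : Type} [Group W] [Finite B] {M : CoxeterMatrix B}
    (cs : CoxeterSystem M W)
    (K : Type) [CommRing K] [IsDomain K] [IsNoetherianRing K] (n : ℕ)
    (π : Representation K W (Fin n → K))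
    (α : B → (Fin n → K)) (cα : B → ((Fin n → K) →ₗ[K] K))
    (h2 : ∀ i : B, cα i (α i) = 2)
    (hrefl : ∀ (i : B) (v : Fin n → K), π (cs.simple i) v = v - cα i v • α i)
    (hsurj : ∀ i : B, Function.Surjective (cα i))
    (hne : ∀ i : B, α i ≠ 0)
    (i : B) (δ : Fin n → K) (hδ : cα i δ = 1) :
    letI R := MvPolynomial (Fin n) K
    letI Q := FractionRing R
    letI s := cs.simple i
    letI δQ : Q := algebraMap R Q (linP δ)
    letI sδQ : Q := algebraMap R Q (actR π s (linP δ))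
    letI a : Q ⊗[↥(invs π s)] Q := δQ ⊗ₜ 1 - 1 ⊗ₜ sδQ
    letI b : Q ⊗[↥(invs π s)] Q := δQ ⊗ₜ 1 - 1 ⊗ₜ δQ
    (∀ m : Q ⊗[↥(invs π s)] Q, ∃! c : Q × Q, m = c.1 • a + c.2 • b) ∧
      (∀ f : MvPolynomial (Fin n) K,
        rmulQ π s (algebraMap R Q f) a = algebraMap R Q f • a ∧
          rmulQ π s (algebraMap R Q f) b = algebraMap R Q (actR π s f) • b) :=
  statement13_general cs K n π α cα hrefl hne i δ hδ
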